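/- Let s ∈ ℂ with Re(s) > 1 and let χ : ℕ → ℂ be a bounded function. Define L_n^χ(s) = Σ_{r=1}^{n} χ(r) / ((n-r)! (n+r)! r^s). Then lim_{n→∞} √n · (2n)! · L_n^χ(s) / 4^n = L(s,χ)/√π, where L(s,χ) = Σ_{r=1}^{∞} χ(r)/r^s. -/

import Mathlib

/-!
With `w n r = √n (2n)! / (4ⁿ (n-r)! (n+r)!) = √n·C(2n, n+r) / 4ⁿ` the sum is `Σ_r w n r · χ(r)/r^s`.
The weights are dominated by the central one `w n 0`, which tends to `1/√π` by Stirling's formula;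
consecutive weights differ by the factor `(n-r)/(n+r+1) → 1`, so every `w n r` tends to `1/√π`.
Tannery's theorem (dominated convergence for series, with majorant `C‖χ(r)/r^s‖`) finishes.
-/

open Finset Filter Topology Real Nat

noncomputable def binomWeight (n r : ℕ) : ℝ := √n * (2 * n).choose (n + r) / 4 ^ n

lemma binomWeight_nonneg (n r : ℕ) : 0 ≤ binomWeight n r := by
  unfold binomWeight; positivity

lemma binomWeight_le_binomWeight_zero (n r : ℕ) : binomWeight n r ≤ binomWeight n 0 := by
  unfold binomWeight
  gcongr
  simpa using Nat.choose_le_middle (n + r) (2 * n)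

lemma binomWeight_eq_factorial {n r : ℕ} (h : r ≤ n) :
    binomWeight n r = √n * (2 * n)! / (4 ^ n * ((n - r)! * (n + r)!)) := by
  rw [binomWeight, Nat.cast_choose ℝ (by omega : n + r ≤ 2 * n),
    show 2 * n - (n + r) = n - r by omega]
  ring

-- For `r ≥ n` the truncated subtraction is harmless: both sides vanish.
lemma binomWeight_succ_mul (n r : ℕ) :
    binomWeight n (r + 1) * (n + r + 1) = binomWeight n r * (n - r : ℕ) := by
  have h := Nat.choose_succ_right_eq (2 * n) (n + r)
  rw [show 2 * n - (n + r) = n - r by omega] at h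
  have h' : ((2 * n).choose (n + r + 1) : ℝ) * (n + r + 1) =
      (2 * n).choose (n + r) * (n - r : ℕ) := by
    exact_mod_cast h
  rw [binomWeight, binomWeight, ← add_assoc]
  linear_combination (√n / 4 ^ n) * h'

lemma binomWeight_zero_eq_stirlingSeq (n : ℕ) :
    binomWeight n 0 = Stirling.stirlingSeq (2 * n) / Stirling.stirlingSeq n ^ 2 := by
  rcases Nat.eq_zero_or_pos n with rfl | hn
  · simp [binomWeight]
  have hn' : (0 : ℝ) < n := by exact_mod_cast hn
  have hsqrt : √(2 * (2 * n : ℝ)) = 2 * √n := by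
    rw [show 2 * (2 * n : ℝ) = 2 ^ 2 * n by ring, sqrt_mul (by positivity), sqrt_sq (by norm_num)]
  have hsq : √(2 * (n : ℝ)) ^ 2 = 2 * n := sq_sqrt (by positivity)
  have hsq' : √(n : ℝ) ^ 2 = n := sq_sqrt hn'.le
  rw [binomWeight_eq_factorial (Nat.zero_le n), Stirling.stirlingSeq, Stirling.stirlingSeq]
  push_cast
  rw [hsqrt, Nat.sub_zero, Nat.add_zero]
  field_simp
  rw [hsq, hsq', pow_mul, ← pow_mul _ n 2, mul_comm n 2, pow_mul]
  ring

lemma tendsto_binomWeight_zero : Tendsto (binomWeight · 0) atTop (𝓝 (√π)⁻¹) := by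
  have h2n : Tendsto (fun n : ℕ => 2 * n) atTop atTop :=
    tendsto_id.const_mul_atTop' (by norm_num)
  have := (Stirling.tendsto_stirlingSeq_sqrt_pi.comp h2n).div
    (Stirling.tendsto_stirlingSeq_sqrt_pi.pow 2) (by positivity)
  rw [sq, div_mul_cancel_right₀ (by positivity)] at this
  exact this.congr fun n => (binomWeight_zero_eq_stirlingSeq n).symm

lemma tendsto_natCast_sub_div_add_atTop (r : ℕ) :
    Tendsto (fun n : ℕ => ((n - r : ℕ) : ℝ) / (n + r + 1)) atTop (𝓝 1) := by
  refine ((tendsto_natCast_div_add_atTop (2 * r + 1 : ℝ)).comp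
    (tendsto_sub_atTop_nat r)).congr' ?_
  filter_upwards [eventually_ge_atTop r] with n hn
  simp only [Function.comp_apply, Nat.cast_sub hn]
  ring_nf

lemma tendsto_binomWeight (r : ℕ) : Tendsto (binomWeight · r) atTop (𝓝 (√π)⁻¹) := by
  induction r with
  | zero => exact tendsto_binomWeight_zero
  | succ r ih =>
    have := ih.mul (tendsto_natCast_sub_div_add_atTop r)
    rw [mul_one] at this
    refine this.congr fun n => ?_
    rw [← mul_div_assoc, ← binomWeight_succ_mul, mul_div_cancel_right₀ _ (by positivity)]

lemma tendsto_sum_range_smul_of_bounded {E : Type*} [NormedAddCommGroup E] [NormedSpace ℝ E]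
    [CompleteSpace E] {w : ℕ → ℕ → ℝ} {a C : ℝ} {c : ℕ → E} (hc : Summable (‖c ·‖))
    (hw : ∀ n k, ‖w n k‖ ≤ C) (hlim : ∀ k, Tendsto (w · k) atTop (𝓝 a)) :
    Tendsto (fun n => ∑ k ∈ range n, w n k • c k) atTop (𝓝 (a • ∑' k, c k)) := by
  have hsum (n : ℕ) : ∑ k ∈ range n, w n k • c k = ∑' k, (if k < n then w n k • c k else 0) := by
    rw [tsum_eq_sum (s := range n) (fun k hk => if_neg (by simpa using hk))]
    exact sum_congr rfl fun k hk => (if_pos (mem_range.mp hk)).symm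
  simp only [hsum, ← (hc.of_norm).tsum_const_smul a]
  refine tendsto_tsum_of_dominated_convergence (bound := fun k => C * ‖c k‖) (hc.mul_left C)
    (fun k => ?_) (Eventually.of_forall fun n k => ?_)
  · refine ((hlim k).smul_const (c k)).congr' ?_
    filter_upwards [eventually_gt_atTop k] with n hn
    rw [if_pos hn]
  · split_ifs
    · rw [norm_smul]; gcongr; exact hw n k
    · rw [norm_zero]; exact mul_nonneg ((norm_nonneg _).trans (hw 0 0)) (norm_nonneg _)

lemma summable_norm_div_natCast_succ_cpow {χ : ℕ → ℂ} {B : ℝ} (hχ : ∀ r, ‖χ r‖ ≤ B) {s : ℂ}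
    (hs : 1 < s.re) : Summable fun k : ℕ => ‖χ (k + 1) / ((k + 1 : ℕ) : ℂ) ^ s‖ := by
  have h := (summable_nat_add_iff 1).mpr
    (LSeriesSummable_of_bounded_of_one_lt_re (fun n _ => hχ n) hs)
  simp only [LSeries.term_def, Nat.add_one_ne_zero, if_false] at h
  exact summable_norm_iff.mpr h

/-- For `Re(s) > 1` and `χ` bounded, with `L_n^χ(s) = Σ_{r=1}^n χ(r)/((n-r)!(n+r)! r^s)`,
we have `√n (2n)! L_n^χ(s) / 4^n → L(s,χ)/√π`. -/
theorem tendsto_factorial_weighted_L_sum (s : ℂ) (hs : 1 < s.re)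
    (χ : ℕ → ℂ) (B : ℝ) (hχ : ∀ r : ℕ, ‖χ r‖ ≤ B) :
    Tendsto (fun n : ℕ =>
        ((Real.sqrt n : ℝ) : ℂ) * ((2 * n).factorial : ℂ) / 4 ^ n *
          ∑ r ∈ Finset.Icc 1 n,
            χ r / (((n - r).factorial : ℂ) * ((n + r).factorial : ℂ) * (r : ℂ) ^ s))
      atTop
      (𝓝 ((∑' r : ℕ, χ (r + 1) / ((r + 1 : ℕ) : ℂ) ^ s) / (Real.sqrt Real.pi : ℂ))) := by
  obtain ⟨C, hC⟩ := (tendsto_binomWeight 0).bddAbove_range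
  have hbound (n k : ℕ) : ‖binomWeight n (k + 1)‖ ≤ C := by
    rw [norm_of_nonneg (binomWeight_nonneg _ _)]
    exact (binomWeight_le_binomWeight_zero _ _).trans (hC (Set.mem_range_self n))
  have hsum := tendsto_sum_range_smul_of_bounded (summable_norm_div_natCast_succ_cpow hχ hs)
    hbound fun k => tendsto_binomWeight (k + 1)
  have hterm (n k : ℕ) (hk : k + 1 ≤ n) : ((√n : ℝ) : ℂ) * (2 * n)! / 4 ^ n *
      (χ (k + 1) / ((n - (k + 1))! * (n + (k + 1))! * ((k + 1 : ℕ) : ℂ) ^ s)) =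
      binomWeight n (k + 1) • (χ (k + 1) / ((k + 1 : ℕ) : ℂ) ^ s) := by
    rw [binomWeight_eq_factorial hk, Complex.real_smul]
    push_cast
    field_simp
  rw [Complex.real_smul, Complex.ofReal_inv, ← div_eq_inv_mul] at hsum
  refine hsum.congr fun n => ?_
  rw [mul_sum, ← Ico_add_one_right_eq_Icc, sum_Ico_eq_sum_range, add_tsub_cancel_right]
  exact sum_congr rfl fun k hk => by
    rw [add_comm 1 k]; exact (hterm n k (mem_range.mp hk)).symm
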